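/- Let (k,δ) be a differential field, let A = (α,β)_{k,ω} be a symbol algebra of degree m with generators u, v, and let d be any derivation on A extending δ. For a ∈ A let a_{00} ∈ k denote its coordinate at the basis element u^0 v^0 = 1 with respect to the basis (u^i v^j). Then for every a ∈ A, the (0,0)-coordinate of d(a) equals δ(a_{00}). In particular, the span A⁰ of the basis elements u^i v^j with (i,j) ≠ (0,0) is stable under d. -/

import Mathlib

section Aux
variable {k : Type*} [Field k] {m : ℕ} {ω α β : k} {A : Type*} [Ring A] [Algebra k A] {u v : A}

lemma symAux_cv (hvu : v * u = ω • (u * v)) :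
    ∀ i : ℕ, v * u ^ i = ω ^ i • (u ^ i * v) := by
  intro i
  induction i with
  | zero => simp
  | succ n ih =>
    rw [pow_succ']
    calc v * (u * u ^ n) = (v * u) * u ^ n := (mul_assoc _ _ _).symm
      _ = (ω • (u * v)) * u ^ n := by rw [hvu]
      _ = ω • (u * (v * u ^ n)) := by rw [smul_mul_assoc, mul_assoc]
      _ = ω • (u * (ω ^ n • (u ^ n * v))) := by rw [ih]
      _ = (ω * ω ^ n) • (u * (u ^ n * v)) := by rw [mul_smul_comm, smul_smul]
      _ = ω ^ (n + 1) • (u * u ^ n * v) := by rw [← pow_succ', mul_assoc]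

lemma symAux_cvv (hvu : v * u = ω • (u * v)) :
    ∀ j i : ℕ, v ^ j * u ^ i = ω ^ (j * i) • (u ^ i * v ^ j) := by
  intro j i
  induction j with
  | zero => simp
  | succ n ih =>
    rw [pow_succ]
    calc v ^ n * v * u ^ i = v ^ n * (v * u ^ i) := mul_assoc _ _ _
      _ = v ^ n * (ω ^ i • (u ^ i * v)) := by rw [symAux_cv hvu i]
      _ = ω ^ i • (v ^ n * u ^ i * v) := by rw [mul_smul_comm, mul_assoc]
      _ = ω ^ i • ((ω ^ (n * i) • (u ^ i * v ^ n)) * v) := by rw [ih]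
      _ = (ω ^ i * ω ^ (n * i)) • (u ^ i * (v ^ n * v)) := by
          rw [smul_mul_assoc, smul_smul, mul_assoc]
      _ = ω ^ ((n + 1) * i) • (u ^ i * (v ^ n * v)) := by
          rw [← pow_add, Nat.succ_mul, Nat.add_comm]

lemma symAux_pow (hu : u ^ m = algebraMap k A α) :
    ∀ n : ℕ, u ^ n = α ^ (n / m) • u ^ (n % m) := by
  intro n
  conv_lhs => rw [← Nat.div_add_mod n m]
  rw [pow_add, pow_mul, hu, ← map_pow, ← Algebra.smul_def]


lemma symAux_mulb (hu : u ^ m = algebraMap k A α) (hv : v ^ m = algebraMap k A β)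
    (hvu : v * u = ω • (u * v))
    (b : Module.Basis (Fin m × Fin m) k A)
    (hb : ∀ p : Fin m × Fin m, b p = u ^ (p.1 : ℕ) * v ^ (p.2 : ℕ))
    (p q : Fin m × Fin m) :
    b p * b q = (ω ^ ((p.2 : ℕ) * (q.1 : ℕ)) *
      (α ^ (((p.1 : ℕ) + (q.1 : ℕ)) / m) * β ^ (((p.2 : ℕ) + (q.2 : ℕ)) / m))) • b (p + q) := by
  have h1 : (((p + q).1 : ℕ)) = ((p.1 : ℕ) + (q.1 : ℕ)) % m := Fin.val_add p.1 q.1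
  have h2 : (((p + q).2 : ℕ)) = ((p.2 : ℕ) + (q.2 : ℕ)) % m := Fin.val_add p.2 q.2
  rw [hb p, hb q, hb (p + q), h1, h2]
  have hkey : u ^ (p.1 : ℕ) * v ^ (p.2 : ℕ) * (u ^ (q.1 : ℕ) * v ^ (q.2 : ℕ))
      = ω ^ ((p.2 : ℕ) * (q.1 : ℕ)) •
        (u ^ ((p.1 : ℕ) + (q.1 : ℕ)) * v ^ ((p.2 : ℕ) + (q.2 : ℕ))) := by
    rw [mul_assoc, ← mul_assoc (v ^ (p.2 : ℕ)), symAux_cvv hvu, smul_mul_assoc, mul_smul_comm]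
    congr 1
    rw [pow_add, pow_add]
    simp [mul_assoc]
  rw [hkey, symAux_pow hu ((p.1 : ℕ) + (q.1 : ℕ)), symAux_pow hv ((p.2 : ℕ) + (q.2 : ℕ)),
    smul_mul_assoc, mul_smul_comm, smul_smul, smul_smul]
  ring_nf


lemma symAux_trace (h0 : 0 < m) (hω : IsPrimitiveRoot ω m)
    (hu : u ^ m = algebraMap k A α) (hv : v ^ m = algebraMap k A β)
    (hvu : v * u = ω • (u * v))
    (b : Module.Basis (Fin m × Fin m) k A)
    (hb : ∀ p : Fin m × Fin m, b p = u ^ (p.1 : ℕ) * v ^ (p.2 : ℕ))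
    (x y : A) :
    b.repr (x * y) (⟨0, h0⟩, ⟨0, h0⟩) = b.repr (y * x) (⟨0, h0⟩, ⟨0, h0⟩) := by
  have hωne : ω ≠ 0 := by
    intro h
    have h1 : ω ^ m = 1 := hω.pow_eq_one
    rw [h, zero_pow (by omega)] at h1
    exact zero_ne_one h1
  set p0 : Fin m × Fin m := (⟨0, h0⟩, ⟨0, h0⟩) with hp0
  have key : ∀ p q : Fin m × Fin m, b.repr (b p * b q) p0 = b.repr (b q * b p) p0 := by
    intro p q
    rw [symAux_mulb hu hv hvu b hb p q, symAux_mulb hu hv hvu b hb q p,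
      map_smul, map_smul, Finsupp.smul_apply, Finsupp.smul_apply,
      Module.Basis.repr_self, Module.Basis.repr_self, Finsupp.single_apply, Finsupp.single_apply,
      add_comm q p]
    by_cases hpq : p + q = p0
    · simp only [smul_eq_mul, mul_one]
      have hpq1 : p.1 + q.1 = (⟨0, h0⟩ : Fin m) := congrArg Prod.fst hpq
      have hpq2 : p.2 + q.2 = (⟨0, h0⟩ : Fin m) := congrArg Prod.snd hpq
      have hd1 : m ∣ (q.1 : ℕ) + (p.1 : ℕ) := by
        apply Nat.dvd_of_mod_eq_zero
        rw [Nat.add_comm, ← Fin.val_add, hpq1]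
      have hd2 : m ∣ (q.2 : ℕ) + (p.2 : ℕ) := by
        apply Nat.dvd_of_mod_eq_zero
        rw [Nat.add_comm, ← Fin.val_add, hpq2]
      have e1 : ω ^ ((p.2 : ℕ) * (q.1 : ℕ)) * ω ^ ((p.2 : ℕ) * (p.1 : ℕ)) = 1 := by
        rw [← pow_add, ← Nat.mul_add, hω.pow_eq_one_iff_dvd]
        exact Dvd.dvd.mul_left hd1 _
      have e2 : ω ^ ((q.2 : ℕ) * (p.1 : ℕ)) * ω ^ ((p.2 : ℕ) * (p.1 : ℕ)) = 1 := by
        rw [← pow_add, ← Nat.add_mul, hω.pow_eq_one_iff_dvd]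
        exact Dvd.dvd.mul_right hd2 _
      have hcw : ω ^ ((p.2 : ℕ) * (q.1 : ℕ)) = ω ^ ((q.2 : ℕ) * (p.1 : ℕ)) :=
        mul_right_cancel₀ (pow_ne_zero _ hωne) (e1.trans e2.symm)
      rw [hcw, Nat.add_comm (q.1 : ℕ), Nat.add_comm (q.2 : ℕ)]
    · rw [if_neg hpq]
      simp
  let T : A →ₗ[k] A →ₗ[k] k := (LinearMap.mul k A).compr₂ (b.coord p0)
  have hT : T = T.flip := by
    apply b.ext; intro p; apply b.ext; intro q
    simpa [T, Module.Basis.coord_apply] using key p q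
  have := LinearMap.congr_fun (LinearMap.congr_fun hT x) y
  simpa [T, Module.Basis.coord_apply] using this

end Aux

/-- For any derivation `d` on a symbol algebra extending `δ`, the
`(0,0)`-coordinate of `d a` equals `δ` of the `(0,0)`-coordinate of `a`; in particular the
trace-zero subspace `A⁰` is stable under `d`. -/
theorem symbolAlgebra_derivation_coord_zero
    {k : Type*} [Field k] {m : ℕ} (hm : 2 ≤ m) (hchar : (m : k) ≠ 0)
    {ω : k} (hω : IsPrimitiveRoot ω m)
    {α β : k} (hα : α ≠ 0) (hβ : β ≠ 0)
    {A : Type*} [Ring A] [Algebra k A]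
    (u v : A)
    (hu : u ^ m = algebraMap k A α)
    (hv : v ^ m = algebraMap k A β)
    (hvu : v * u = ω • (u * v))
    (b : Module.Basis (Fin m × Fin m) k A)
    (hb : ∀ p : Fin m × Fin m, b p = u ^ (p.1 : ℕ) * v ^ (p.2 : ℕ))
    (δ : k → k)
    (hδa : ∀ x y : k, δ (x + y) = δ x + δ y)
    (hδm : ∀ x y : k, δ (x * y) = x * δ y + δ x * y)
    (d : A → A)
    (hda : ∀ x y : A, d (x + y) = d x + d y)
    (hdm : ∀ x y : A, d (x * y) = x * d y + d x * y)
    (hdk : ∀ c : k, d (algebraMap k A c) = algebraMap k A (δ c)) :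
    (∀ a : A, b.repr (d a) (⟨0, by omega⟩, ⟨0, by omega⟩)
        = δ (b.repr a (⟨0, by omega⟩, ⟨0, by omega⟩))) ∧
    (∀ a : A, b.repr a (⟨0, by omega⟩, ⟨0, by omega⟩) = 0 →
        b.repr (d a) (⟨0, by omega⟩, ⟨0, by omega⟩) = 0) := by
  have h0 : 0 < m := by omega
  set p0 : Fin m × Fin m := (⟨0, h0⟩, ⟨0, h0⟩) with hp0def
  -- trace functional
  set τ : A →ₗ[k] k := b.coord p0 with hτdef
  have hτ : ∀ a : A, τ a = b.repr a p0 := fun a => Module.Basis.coord_apply b p0 a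
  have htr : ∀ x y : A, τ (x * y) = τ (y * x) := by
    intro x y
    rw [hτ, hτ]
    exact symAux_trace h0 hω hu hv hvu b hb x y
  -- derivation basics
  have hd0 : d 0 = 0 := by
    have h := hda 0 0
    rw [add_zero] at h
    exact left_eq_add.mp h
  have hδ0 : δ 0 = 0 := by
    have h := hδa 0 0
    rw [add_zero] at h
    exact left_eq_add.mp h
  have hδ1 : δ 1 = 0 := by
    have h := hδm 1 1
    rw [mul_one, one_mul, mul_one] at h
    exact left_eq_add.mp h
  have hd1 : d 1 = 0 := by
    have h := hdk 1
    rw [map_one, hδ1, map_zero] at h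
    exact h
  have hdsub : ∀ x y : A, d (x - y) = d x - d y := by
    intro x y
    have h := hda (x - y) y
    rw [sub_add_cancel] at h
    rw [h]; abel
  have hdsmul : ∀ (c : k) (x : A), d (c • x) = δ c • x + c • d x := by
    intro c x
    rw [Algebra.smul_def, hdm, hdk, ← Algebra.smul_def, ← Algebra.smul_def, add_comm]
  -- τ of a commutator's derivative vanishes
  have hcomm : ∀ (x z : A), τ (d (x * z - z * x)) = 0 := by
    intro x z
    rw [hdsub, hdm, hdm, map_sub, map_add, map_add, htr x (d z), htr (d x) z]
    ring
  have hcomm0 : ∀ (x z : A), τ (x * z - z * x) = 0 := by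
    intro x z
    rw [map_sub, htr x z, sub_self]
  -- the key claim machinery
  have claim : ∀ (r : Fin m × Fin m) (x z : A) (c : k), c ≠ 0 →
      x * z - z * x = c • b r → τ (d (b r)) = 0 := by
    intro r x z c hc hcz
    have hw : b r = c⁻¹ • (x * z - z * x) := by
      rw [hcz, smul_smul, inv_mul_cancel₀ hc, one_smul]
    rw [hw, hdsmul, map_add, map_smul, map_smul, hcomm0, hcomm, smul_zero, smul_zero, add_zero]
  -- inverses
  have huu' : u * (α⁻¹ • u ^ (m - 1)) = 1 := by
    have h : u * u ^ (m - 1) = u ^ m := by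
      rw [← pow_succ']; congr 1; omega
    rw [mul_smul_comm, h, hu, Algebra.algebraMap_eq_smul_one, smul_smul,
      inv_mul_cancel₀ hα, one_smul]
  have hu'u : (α⁻¹ • u ^ (m - 1)) * u = 1 := by
    have h : u ^ (m - 1) * u = u ^ m := by
      rw [← pow_succ]; congr 1; omega
    rw [smul_mul_assoc, h, hu, Algebra.algebraMap_eq_smul_one, smul_smul,
      inv_mul_cancel₀ hα, one_smul]
  have hvv' : v * (β⁻¹ • v ^ (m - 1)) = 1 := by
    have h : v * v ^ (m - 1) = v ^ m := by
      rw [← pow_succ']; congr 1; omega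
    rw [mul_smul_comm, h, hv, Algebra.algebraMap_eq_smul_one, smul_smul,
      inv_mul_cancel₀ hβ, one_smul]
  have hv'v : (β⁻¹ • v ^ (m - 1)) * v = 1 := by
    have h : v ^ (m - 1) * v = v ^ m := by
      rw [← pow_succ]; congr 1; omega
    rw [smul_mul_assoc, h, hv, Algebra.algebraMap_eq_smul_one, smul_smul,
      inv_mul_cancel₀ hβ, one_smul]
  -- τ (d (b r)) = 0 for every basis index r
  have hτd : ∀ r : Fin m × Fin m, τ (d (b r)) = 0 := by
    intro r
    by_cases h2 : (r.2 : ℕ) = 0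
    · by_cases h1 : (r.1 : ℕ) = 0
      · have hone : b r = 1 := by
          rw [hb r, h1, h2, pow_zero, pow_zero, one_mul]
        rw [hone, hd1, map_zero]
      · -- use v : commutator with z = b r * (β⁻¹ • v^(m-1))
        have hvw : v * b r = ω ^ (r.1 : ℕ) • (b r * v) := by
          rw [hb r, h2, pow_zero, mul_one]
          exact symAux_cv hvu (r.1 : ℕ)
        have hcne : (ω ^ (r.1 : ℕ) - 1 : k) ≠ 0 := by
          rw [sub_ne_zero]
          intro h
          rw [hω.pow_eq_one_iff_dvd] at h
          have := Nat.le_of_dvd (Nat.pos_of_ne_zero h1) h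
          have := r.1.isLt
          omega
        apply claim r v (b r * (β⁻¹ • v ^ (m - 1))) _ hcne
        have e1 : v * (b r * (β⁻¹ • v ^ (m - 1))) = ω ^ (r.1 : ℕ) • b r := by
          rw [← mul_assoc, hvw, smul_mul_assoc, mul_assoc, hvv', mul_one]
        have e2 : (b r * (β⁻¹ • v ^ (m - 1))) * v = b r := by
          rw [mul_assoc, hv'v, mul_one]
        rw [e1, e2, sub_smul, one_smul]
    · -- use u : commutator with z = (α⁻¹ • u^(m-1)) * b r
      have hwu : b r * u = ω ^ (r.2 : ℕ) • (u * b r) := by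
        rw [hb r, mul_assoc]
        have h := symAux_cvv hvu (r.2 : ℕ) 1
        rw [pow_one, Nat.mul_one] at h
        rw [h, mul_smul_comm]
        congr 1
        rw [← mul_assoc, ← mul_assoc, ← pow_succ, ← pow_succ']
      have hcne : (1 - ω ^ (r.2 : ℕ) : k) ≠ 0 := by
        rw [sub_ne_zero]
        intro h
        rw [eq_comm, hω.pow_eq_one_iff_dvd] at h
        have := Nat.le_of_dvd (Nat.pos_of_ne_zero h2) h
        have := r.2.isLt
        omega
      apply claim r u ((α⁻¹ • u ^ (m - 1)) * b r) _ hcne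
      have e1 : u * ((α⁻¹ • u ^ (m - 1)) * b r) = b r := by
        rw [← mul_assoc, huu', one_mul]
      have e2 : ((α⁻¹ • u ^ (m - 1)) * b r) * u = ω ^ (r.2 : ℕ) • b r := by
        rw [mul_assoc, hwu, mul_smul_comm, ← mul_assoc, hu'u, one_mul]
      rw [e1, e2, sub_smul, one_smul]
    -- main statement
  have main : ∀ a : A, b.repr (d a) p0 = δ (b.repr a p0) := by
    intro a
    conv_lhs => rw [← b.sum_repr a]
    have hdsum : d (∑ r : Fin m × Fin m, b.repr a r • b r)
        = ∑ r : Fin m × Fin m, d (b.repr a r • b r) :=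
      map_sum (AddMonoidHom.mk' d hda) _ _
    rw [hdsum, ← hτ, map_sum]
    have heach : ∀ r : Fin m × Fin m,
        τ (d (b.repr a r • b r)) = if r = p0 then δ (b.repr a r) else 0 := by
      intro r
      rw [hdsmul, map_add, map_smul, map_smul, hτd r, smul_zero, add_zero, hτ,
        Module.Basis.repr_self, Finsupp.single_apply, smul_eq_mul, mul_ite, mul_one, mul_zero]
    rw [Finset.sum_congr rfl (fun r _ => heach r), Finset.sum_ite_eq' Finset.univ p0
      (fun r => δ (b.repr a r)), if_pos (Finset.mem_univ p0)]
  refine ⟨fun a => main a, fun a h => ?_⟩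
  rw [main a, h, hδ0]
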